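/- Let X = (X^(1), X^(2)) with X^(1), X^(2) i.i.d. Bernoulli(1/2) (the DSBS with q = 1/2), and let Y ~ Uniform{1,2} be independent of X with f(X, Y) = X^(Y). Then the optimal single-letter region {(R_c, R_u) : ∃ p_{V|X}, R_c ≥ I(X; V|Y), R_u ≥ H(f(X,Y)|V,Y)} equals {(R_c, R_u) : R_c ≥ 0, R_u ≥ 0, R_c + 2 R_u ≥ 2}. -/

import Mathlib

open scoped BigOperators

namespace Caching

/-- A finitely supported probability mass function on the sample space `Ω`. -/
structure FinPMF (Ω : Type*) [Fintype Ω] where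
  p : Ω → ℝ
  nonneg : ∀ ω, 0 ≤ p ω
  sum_one : ∑ ω, p ω = 1

variable {Ω : Type*} [Fintype Ω]

/-- The probability that the random variable `X` takes the value `x`. -/
def prob {α : Type*} [DecidableEq α] (μ : FinPMF Ω) (X : Ω → α) (x : α) : ℝ :=
  ∑ ω, if X ω = x then μ.p ω else 0

/-- Shannon entropy (in bits) of a finite discrete random variable. -/
noncomputable def H {α : Type*} [Fintype α] [DecidableEq α] (μ : FinPMF Ω) (X : Ω → α) : ℝ :=
  -∑ x, prob μ X x * Real.logb 2 (prob μ X x)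

/-- Conditional entropy `H(X | Y)` (in bits). -/
noncomputable def condH {α β : Type*} [Fintype α] [DecidableEq α] [Fintype β] [DecidableEq β]
    (μ : FinPMF Ω) (X : Ω → α) (Y : Ω → β) : ℝ :=
  H μ (fun ω => (X ω, Y ω)) - H μ Y

/-- Mutual information `I(X; Y)` (in bits). -/
noncomputable def mutInfo {α β : Type*} [Fintype α] [DecidableEq α] [Fintype β] [DecidableEq β]
    (μ : FinPMF Ω) (X : Ω → α) (Y : Ω → β) : ℝ :=
  H μ X + H μ Y - H μ (fun ω => (X ω, Y ω))

/-- Conditional mutual information `I(X; Y | Z)` (in bits). -/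
noncomputable def condMutInfo {α β γ : Type*} [Fintype α] [DecidableEq α] [Fintype β]
    [DecidableEq β] [Fintype γ] [DecidableEq γ]
    (μ : FinPMF Ω) (X : Ω → α) (Y : Ω → β) (Z : Ω → γ) : ℝ :=
  condH μ X Z + condH μ Y Z - condH μ (fun ω => (X ω, Y ω)) Z

/-- `X` and `Y` are independent. -/
def Indep {α β : Type*} [DecidableEq α] [DecidableEq β]
    (μ : FinPMF Ω) (X : Ω → α) (Y : Ω → β) : Prop :=
  ∀ x y, prob μ (fun ω => (X ω, Y ω)) (x, y) = prob μ X x * prob μ Y y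

/-- `V — X — Y` form a Markov chain: `V` and `Y` are conditionally independent given `X`. -/
def MarkovChain {α β γ : Type*} [DecidableEq α] [DecidableEq β] [DecidableEq γ]
    (μ : FinPMF Ω) (V : Ω → γ) (X : Ω → α) (Y : Ω → β) : Prop :=
  ∀ v x y, prob μ (fun ω => (V ω, X ω, Y ω)) (v, x, y) * prob μ X x
    = prob μ (fun ω => (V ω, X ω)) (v, x) * prob μ (fun ω => (X ω, Y ω)) (x, y)


/-- The joint law on `V × X × Y` induced by a test channel `W = p_{V|X}` and a source pmf `p`. -/
noncomputable def inducedPMF {n : ℕ} {α β : Type*} [Fintype α] [Fintype β]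
    (p : α × β → ℝ) (hp0 : ∀ a, 0 ≤ p a) (hp1 : ∑ a, p a = 1)
    (W : Fin n → α → ℝ) (hW0 : ∀ v x, 0 ≤ W v x) (hW1 : ∀ x, ∑ v, W v x = 1) :
    FinPMF (Fin n × α × β) where
  p := fun ω => W ω.1 ω.2.1 * p ω.2
  nonneg := fun ω => mul_nonneg (hW0 _ _) (hp0 _)
  sum_one := by
    have h : ∑ ω : Fin n × α × β, W ω.1 ω.2.1 * p ω.2
        = ∑ a : α × β, (∑ v, W v a.1) * p a := by
      rw [Fintype.sum_prod_type, Finset.sum_comm]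
      simp [Finset.sum_mul]
    rw [h]
    simp only [hW1, one_mul]
    exact hp1

/-- The single-letter rate region for the single-user caching problem:
pairs `(R_c, R_u)` with `R_c ≥ I(X; V | Y)` and `R_u ≥ H(f(X,Y) | V, Y)` for some
test channel `p_{V|X}` over a finite alphabet (so that `V — X — Y` is a Markov chain). -/
noncomputable def cacheRegion {α β S : Type*} [Fintype α] [DecidableEq α]
    [Fintype β] [DecidableEq β] [Fintype S] [DecidableEq S]
    (p : α × β → ℝ) (hp0 : ∀ a, 0 ≤ p a) (hp1 : ∑ a, p a = 1)
    (f : α → β → S) : Set (ℝ × ℝ) :=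
  {R | ∃ (n : ℕ) (W : Fin n → α → ℝ) (hW0 : ∀ v x, 0 ≤ W v x) (hW1 : ∀ x, ∑ v, W v x = 1),
    R.1 ≥ condMutInfo (inducedPMF p hp0 hp1 W hW0 hW1)
            (fun ω => ω.2.1) (fun ω => ω.1) (fun ω => ω.2.2) ∧
    R.2 ≥ condH (inducedPMF p hp0 hp1 W hW0 hW1)
            (fun ω => f ω.2.1 ω.2.2) (fun ω => (ω.1, ω.2.2))}

/-- The DSBS source with crossover probability `q = 1/2`: `X = (X¹, X²)` with `X¹, X²`
i.i.d. uniform on `{0,1}`, and `Y` uniform on `{1,2}` independent of `X`. -/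
noncomputable def pDSBShalf : (Bool × Bool) × Fin 2 → ℝ := fun _ => 1 / 8

/-- The component-selection function `f(X, Y) = X^(Y)`. -/
def fSel : Bool × Bool → Fin 2 → Bool :=
  fun x y => if y = 0 then x.1 else x.2

/-! Write `X = (X¹, X²)`. Since `Y` is uniform and independent of `(X, V)`, one has
`I(X; V | Y) = 2 - H(X | V)` and `H(X^(Y) | V, Y) = (H(X¹ | V) + H(X² | V)) / 2`. Submodularity
of entropy gives `H(X | V) ≤ H(X¹ | V) + H(X² | V)`, so every test channel satisfies
`R_c + 2 R_u ≥ 2`. Conversely, the channel that reveals `X` with probability `l` and otherwise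
outputs an erasure symbol achieves `(R_c, R_u) = (2 l, 1 - l)`. -/

section Entropy

variable (μ : FinPMF Ω)

lemma prob_nonneg {α : Type*} [DecidableEq α] (X : Ω → α) (x : α) : 0 ≤ prob μ X x :=
  Finset.sum_nonneg fun ω _ => by split_ifs <;> simp [μ.nonneg]

lemma sum_prob_mul {α : Type*} [Fintype α] [DecidableEq α] (X : Ω → α) (F : α → ℝ) :
    ∑ x, prob μ X x * F x = ∑ ω, μ.p ω * F (X ω) := by
  simp only [prob, Finset.sum_mul, ite_mul, zero_mul]
  rw [Finset.sum_comm]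
  simp

lemma sum_prob {α : Type*} [Fintype α] [DecidableEq α] (X : Ω → α) :
    ∑ x, prob μ X x = 1 := by
  simpa [μ.sum_one] using sum_prob_mul μ X 1

lemma sum_prob_mul_comp {α β : Type*} [Fintype α] [DecidableEq α] [Fintype β] [DecidableEq β]
    (X : Ω → α) (g : α → β) (F : β → ℝ) :
    ∑ x, prob μ X x * F (g x) = ∑ y, prob μ (fun ω => g (X ω)) y * F y := by
  rw [sum_prob_mul, sum_prob_mul μ (fun ω => g (X ω))]

lemma prob_le_prob_comp {α β : Type*} [DecidableEq α] [DecidableEq β]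
    (X : Ω → α) (g : α → β) (x : α) : prob μ X x ≤ prob μ (fun ω => g (X ω)) (g x) :=
  Finset.sum_le_sum fun ω _ => by
    split_ifs with hx hg
    · exact le_rfl
    · exact absurd (congrArg g hx) hg
    · exact μ.nonneg ω
    · exact le_rfl

lemma sum_prob_pair_fst {α β : Type*} [Fintype α] [DecidableEq α] [DecidableEq β]
    (A : Ω → α) (B : Ω → β) (b : β) :
    ∑ a, prob μ (fun ω => (A ω, B ω)) (a, b) = prob μ B b := by
  unfold prob
  rw [Finset.sum_comm]
  refine Finset.sum_congr rfl fun ω _ => ?_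
  by_cases h : B ω = b <;> simp [h]

lemma mul_logb_sub_mul_logb_le {p q : ℝ} (hp : 0 ≤ p) (hq : 0 ≤ q) (hpq : 0 < p → 0 < q) :
    p * Real.logb 2 q - p * Real.logb 2 p ≤ (q - p) / Real.log 2 := by
  rcases hp.eq_or_lt with rfl | hp
  · simpa using div_nonneg hq (Real.log_nonneg one_le_two)
  have hq := hpq hp
  calc p * Real.logb 2 q - p * Real.logb 2 p = p * Real.log (q / p) / Real.log 2 := by
        rw [Real.log_div hq.ne' hp.ne', Real.logb, Real.logb]; ring
    _ ≤ p * (q / p - 1) / Real.log 2 := by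
        gcongr
        exact Real.log_le_sub_one_of_pos (div_pos hq hp)
    _ = (q - p) / Real.log 2 := by field_simp

lemma sum_mul_logb_le_sum_mul_logb {ι : Type*} [Fintype ι] {p q : ι → ℝ}
    (hp : ∀ i, 0 ≤ p i) (hq : ∀ i, 0 ≤ q i) (hpq : ∀ i, 0 < p i → 0 < q i)
    (hsum : ∑ i, q i ≤ ∑ i, p i) :
    ∑ i, p i * Real.logb 2 (q i) ≤ ∑ i, p i * Real.logb 2 (p i) := by
  have key : ∑ i, (p i * Real.logb 2 (q i) - p i * Real.logb 2 (p i)) ≤ 0 :=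
    calc _ ≤ ∑ i, (q i - p i) / Real.log 2 :=
          Finset.sum_le_sum fun i _ => mul_logb_sub_mul_logb_le (hp i) (hq i) (hpq i)
      _ = (∑ i, q i - ∑ i, p i) / Real.log 2 := by
          rw [← Finset.sum_div, Finset.sum_sub_distrib]
      _ ≤ 0 := div_nonpos_of_nonpos_of_nonneg (by linarith) (Real.log_nonneg one_le_two)
  rw [Finset.sum_sub_distrib] at key
  linarith

lemma H_comp_le {α β : Type*} [Fintype α] [DecidableEq α] [Fintype β] [DecidableEq β]
    (X : Ω → α) (g : α → β) : H μ (fun ω => g (X ω)) ≤ H μ X := by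
  rw [H, H, neg_le_neg_iff, ← sum_prob_mul_comp μ X g]
  refine Finset.sum_le_sum fun x _ => ?_
  rcases (prob_nonneg μ X x).eq_or_lt with h | h
  · simp [← h]
  · exact mul_le_mul_of_nonneg_left
      (Real.logb_le_logb_of_le one_lt_two h (prob_le_prob_comp μ X g x)) h.le

lemma condH_nonneg {α β : Type*} [Fintype α] [DecidableEq α] [Fintype β] [DecidableEq β]
    (X : Ω → α) (Y : Ω → β) : 0 ≤ condH μ X Y :=
  sub_nonneg.2 (H_comp_le μ (fun ω => (X ω, Y ω)) Prod.snd)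

lemma sum_prob_mul_logb_comp {α β : Type*} [Fintype α] [DecidableEq α] [Fintype β]
    [DecidableEq β] (X : Ω → α) (g : α → β) :
    ∑ x, prob μ X x * Real.logb 2 (prob μ (fun ω => g (X ω)) (g x))
      = -H μ (fun ω => g (X ω)) := by
  rw [sum_prob_mul_comp μ X g (fun y => Real.logb 2 (prob μ (fun ω => g (X ω)) y)), H, neg_neg]

lemma H_submodular {α β γ : Type*} [Fintype α] [DecidableEq α] [Fintype β] [DecidableEq β]
    [Fintype γ] [DecidableEq γ] (A : Ω → α) (B : Ω → β) (C : Ω → γ) :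
    H μ (fun ω => ((A ω, B ω), C ω)) + H μ C
      ≤ H μ (fun ω => (A ω, C ω)) + H μ (fun ω => (B ω, C ω)) := by
  set J := fun ω => ((A ω, B ω), C ω)
  set pAC := prob μ (fun ω => (A ω, C ω))
  set pBC := prob μ (fun ω => (B ω, C ω))
  set pC := prob μ C
  -- Gibbs' inequality against the law under which `A` and `B` are independent given `C`
  set q : (α × β) × γ → ℝ := fun i => pAC (i.1.1, i.2) * pBC (i.1.2, i.2) / pC i.2
  have hq0 : ∀ i, 0 ≤ q i := fun i =>
    div_nonneg (mul_nonneg (prob_nonneg _ _ _) (prob_nonneg _ _ _)) (prob_nonneg _ _ _)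
  have hq_sum : ∑ i, q i = 1 := by
    rw [Fintype.sum_prod_type_right, ← sum_prob μ C]
    refine Finset.sum_congr rfl fun c _ => ?_
    calc ∑ ab : α × β, q (ab, c) = (∑ a, pAC (a, c)) * (∑ b, pBC (b, c)) / pC c := by
          rw [Finset.sum_mul_sum, Finset.sum_div, Fintype.sum_prod_type]
          simp_rw [Finset.sum_div]
          rfl
      _ = pC c := by rw [sum_prob_pair_fst, sum_prob_pair_fst, mul_self_div_self]
  have hpos : ∀ i, 0 < prob μ J i →
      0 < pAC (i.1.1, i.2) ∧ 0 < pBC (i.1.2, i.2) ∧ 0 < pC i.2 :=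
    fun i h => ⟨h.trans_le (prob_le_prob_comp μ J (fun i => (i.1.1, i.2)) i),
      h.trans_le (prob_le_prob_comp μ J (fun i => (i.1.2, i.2)) i),
      h.trans_le (prob_le_prob_comp μ J Prod.snd i)⟩
  have hsplit : ∀ i, prob μ J i * Real.logb 2 (q i)
      = prob μ J i * Real.logb 2 (pAC (i.1.1, i.2)) + prob μ J i * Real.logb 2 (pBC (i.1.2, i.2))
        - prob μ J i * Real.logb 2 (pC i.2) := by
    intro i
    rcases (prob_nonneg μ J i).eq_or_lt with h | h
    · simp [← h]
    obtain ⟨hAC, hBC, hC⟩ := hpos i h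
    rw [Real.logb_div (by positivity) hC.ne', Real.logb_mul hAC.ne' hBC.ne']
    ring
  have gibbs := sum_mul_logb_le_sum_mul_logb (prob_nonneg μ J) hq0
    (fun i h => div_pos (mul_pos (hpos i h).1 (hpos i h).2.1) (hpos i h).2.2)
    (by rw [hq_sum, sum_prob])
  rw [Finset.sum_congr rfl fun i _ => hsplit i, Finset.sum_sub_distrib, Finset.sum_add_distrib,
    sum_prob_mul_logb_comp μ J (fun i => (i.1.1, i.2)),
    sum_prob_mul_logb_comp μ J (fun i => (i.1.2, i.2)),
    sum_prob_mul_logb_comp μ J Prod.snd, ← neg_neg (∑ i, _ * _), ← H] at gibbs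
  linarith

lemma condMutInfo_nonneg {α β γ : Type*} [Fintype α] [DecidableEq α] [Fintype β]
    [DecidableEq β] [Fintype γ] [DecidableEq γ] (X : Ω → α) (Y : Ω → β) (Z : Ω → γ) :
    0 ≤ condMutInfo μ X Y Z := by
  have := H_submodular μ X Y Z
  unfold condMutInfo condH
  linarith

lemma H_pair_of_indep {α β : Type*} [Fintype α] [DecidableEq α] [Fintype β] [DecidableEq β]
    {A : Ω → α} {B : Ω → β} (h : Indep μ A B) :
    H μ (fun ω => (A ω, B ω)) = H μ A + H μ B := by
  set J := fun ω => (A ω, B ω)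
  have hsplit : ∀ i, prob μ J i * Real.logb 2 (prob μ J i)
      = prob μ J i * Real.logb 2 (prob μ A i.1) + prob μ J i * Real.logb 2 (prob μ B i.2) := by
    intro i
    rcases (prob_nonneg μ J i).eq_or_lt with h0 | h0
    · simp [← h0]
    have hA := h0.trans_le (prob_le_prob_comp μ J Prod.fst i)
    have hB := h0.trans_le (prob_le_prob_comp μ J Prod.snd i)
    rw [show prob μ J i = _ from h i.1 i.2, Real.logb_mul hA.ne' hB.ne']
    ring
  rw [H, Finset.sum_congr rfl fun i _ => hsplit i, Finset.sum_add_distrib,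
    sum_prob_mul_logb_comp μ J Prod.fst, sum_prob_mul_logb_comp μ J Prod.snd]
  ring

end Entropy

lemma div_mul_logb_div (t : ℝ) {c : ℝ} (hc : c ≠ 0) :
    t / c * Real.logb 2 (t / c) = (t * Real.logb 2 t - t * Real.logb 2 c) / c := by
  rcases eq_or_ne t 0 with rfl | ht
  · simp
  rw [Real.logb_div ht hc]
  ring

lemma logb_two_four : Real.logb 2 4 = 2 := by
  rw [show (4 : ℝ) = 2 ^ 2 by norm_num, Real.logb_pow, Real.logb_self_eq_one one_lt_two]
  norm_num

lemma prob_inducedPMF {n : ℕ} {α β γ : Type*} [Fintype α] [Fintype β] [DecidableEq γ]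
    (p : α × β → ℝ) (hp0 : ∀ a, 0 ≤ p a) (hp1 : ∑ a, p a = 1)
    (W : Fin n → α → ℝ) (hW0 : ∀ v x, 0 ≤ W v x) (hW1 : ∀ x, ∑ v, W v x = 1)
    (G : Fin n → α → β → γ) (c : γ) :
    prob (inducedPMF p hp0 hp1 W hW0 hW1) (fun ω => G ω.1 ω.2.1 ω.2.2) c
      = ∑ v, ∑ x, ∑ y, if G v x y = c then W v x * p (x, y) else 0 := by
  simp only [prob, Fintype.sum_prod_type]
  rfl

@[simp] lemma fSel_zero (x : Bool × Bool) : fSel x 0 = x.1 := rfl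

@[simp] lemma fSel_one (x : Bool × Bool) : fSel x 1 = x.2 := rfl

section DSBS

variable (hp0 : ∀ a, 0 ≤ pDSBShalf a) (hp1 : ∑ a, pDSBShalf a = 1)
  {n : ℕ} (W : Fin n → Bool × Bool → ℝ) (hW0 : ∀ v x, 0 ≤ W v x)
  (hW1 : ∀ x, ∑ v, W v x = 1)

local notation "𝓟" => inducedPMF pDSBShalf hp0 hp1 W hW0 hW1

lemma prob_dsbs_comp {γ : Type*} [DecidableEq γ] (g : Fin n → Bool × Bool → γ) (c : γ) :
    prob 𝓟 (fun ω => g ω.1 ω.2.1) c = ∑ v, ∑ x, if g v x = c then W v x / 4 else 0 := by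
  rw [prob_inducedPMF (G := fun v x _ => g v x)]
  simp only [pDSBShalf, Fin.sum_univ_two]
  refine Finset.sum_congr rfl fun v _ => Finset.sum_congr rfl fun x _ => ?_
  split_ifs <;> ring

lemma prob_dsbs_comp_pair_snd {γ : Type*} [DecidableEq γ] (g : Fin n → Bool × Bool → γ)
    (c : γ) (y : Fin 2) :
    prob 𝓟 (fun ω => (g ω.1 ω.2.1, ω.2.2)) (c, y)
      = prob 𝓟 (fun ω => g ω.1 ω.2.1) c / 2 := by
  rw [prob_inducedPMF (G := fun v x y => (g v x, y)), prob_dsbs_comp, Finset.sum_div]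
  simp only [Finset.sum_div]
  refine Finset.sum_congr rfl fun v _ => Finset.sum_congr rfl fun x _ => ?_
  by_cases h : g v x = c <;> simp [h, pDSBShalf]
  ring

lemma prob_dsbs_snd (y : Fin 2) : prob 𝓟 (fun ω => ω.2.2) y = 1 / 2 := by
  rw [prob_inducedPMF (G := fun _ _ y => y)]
  simp [pDSBShalf, ← Finset.sum_mul, Finset.sum_comm (γ := Fin n), hW1]
  norm_num

lemma prob_dsbs_fst (x : Bool × Bool) : prob 𝓟 (fun ω => ω.2.1) x = 1 / 4 := by
  rw [prob_dsbs_comp (g := fun _ x => x)]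
  simp [← Finset.sum_div, hW1]

lemma indep_dsbs_snd {γ : Type*} [DecidableEq γ] (g : Fin n → Bool × Bool → γ) :
    Indep 𝓟 (fun ω => g ω.1 ω.2.1) (fun ω => ω.2.2) := fun c y => by
  rw [prob_dsbs_comp_pair_snd, prob_dsbs_snd]
  ring

lemma H_dsbs_snd : H 𝓟 (fun ω => ω.2.2) = 1 := by
  simp [H, prob_dsbs_snd]

lemma H_dsbs_fst : H 𝓟 (fun ω => ω.2.1) = 2 := by
  simp [H, prob_dsbs_fst, logb_two_four]

lemma H_dsbs_comp_pair_snd {γ : Type*} [Fintype γ] [DecidableEq γ]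
    (g : Fin n → Bool × Bool → γ) :
    H 𝓟 (fun ω => (g ω.1 ω.2.1, ω.2.2)) = H 𝓟 (fun ω => g ω.1 ω.2.1) + 1 := by
  rw [H_pair_of_indep _ (indep_dsbs_snd hp0 hp1 W hW0 hW1 g), H_dsbs_snd]

lemma condMutInfo_dsbs :
    condMutInfo 𝓟 (fun ω => ω.2.1) (fun ω => ω.1) (fun ω => ω.2.2)
      = 2 + H 𝓟 (fun ω => ω.1) - H 𝓟 (fun ω => (ω.2.1, ω.1)) := by
  rw [condMutInfo, condH, condH, condH, H_dsbs_comp_pair_snd (g := fun _ x => x),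
    H_dsbs_comp_pair_snd (g := fun v _ => v), H_dsbs_comp_pair_snd (g := fun v x => (x, v)),
    H_dsbs_fst, H_dsbs_snd]
  ring

lemma prob_dsbs_fSel (b : Bool) (v : Fin n) (y : Fin 2) :
    prob 𝓟 (fun ω => (fSel ω.2.1 ω.2.2, (ω.1, ω.2.2))) (b, (v, y))
      = prob 𝓟 (fun ω => (fSel ω.2.1 y, ω.1)) (b, v) / 2 := by
  rw [← prob_dsbs_comp_pair_snd hp0 hp1 W hW0 hW1 (fun v x => (fSel x y, v)) (b, v) y]
  refine Finset.sum_congr rfl fun ω _ => ?_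
  by_cases h : ω.2.2 = y <;> simp [h]

lemma H_dsbs_fSel :
    H 𝓟 (fun ω => (fSel ω.2.1 ω.2.2, (ω.1, ω.2.2)))
      = (H 𝓟 (fun ω => (ω.2.1.1, ω.1)) + H 𝓟 (fun ω => (ω.2.1.2, ω.1))) / 2 + 1 := by
  have hsum₁ := sum_prob 𝓟 (fun ω => (ω.2.1.1, ω.1))
  have hsum₂ := sum_prob 𝓟 (fun ω => (ω.2.1.2, ω.1))
  simp only [H, Fintype.sum_prod_type, Fin.sum_univ_two, prob_dsbs_fSel, fSel_zero, fSel_one,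
    div_mul_logb_div _ two_ne_zero, Real.logb_self_eq_one one_lt_two, mul_one] at *
  simp only [Finset.sum_add_distrib, ← Finset.sum_div, Finset.sum_sub_distrib, hsum₁, hsum₂]
  ring

lemma two_le_condMutInfo_add_two_mul_condH_dsbs :
    2 ≤ condMutInfo 𝓟 (fun ω => ω.2.1) (fun ω => ω.1) (fun ω => ω.2.2)
      + 2 * condH 𝓟 (fun ω => fSel ω.2.1 ω.2.2) (fun ω => (ω.1, ω.2.2)) := by
  have hsub := H_submodular 𝓟 (fun ω => ω.2.1.1) (fun ω => ω.2.1.2) (fun ω => ω.1)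
  rw [condMutInfo_dsbs, condH, H_dsbs_fSel, H_dsbs_comp_pair_snd (g := fun v _ => v)]
  linarith

end DSBS

def enc : Bool × Bool → Fin 5
  | (false, false) => 0
  | (false, true) => 1
  | (true, false) => 2
  | (true, true) => 3

noncomputable def eraseChannel (l : ℝ) : Fin 5 → Bool × Bool → ℝ :=
  fun v x => if v = enc x then l else if v = 4 then 1 - l else 0

lemma eraseChannel_nonneg {l : ℝ} (h0 : 0 ≤ l) (h1 : l ≤ 1) (v : Fin 5) (x : Bool × Bool) :
    0 ≤ eraseChannel l v x := by
  unfold eraseChannel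
  split_ifs <;> linarith

lemma sum_eraseChannel (l : ℝ) (x : Bool × Bool) : ∑ v, eraseChannel l v x = 1 := by
  rcases x with ⟨_ | _, _ | _⟩ <;> simp [eraseChannel, enc, Fin.sum_univ_five]

section Erasure

variable (hp0 : ∀ a, 0 ≤ pDSBShalf a) (hp1 : ∑ a, pDSBShalf a = 1) {l : ℝ} (hl0 : 0 ≤ l)
  (hl1 : l ≤ 1)

local notation "𝓔" =>
  inducedPMF pDSBShalf hp0 hp1 (eraseChannel l) (eraseChannel_nonneg hl0 hl1) (sum_eraseChannel l)

lemma condMutInfo_eraseChannel :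
    condMutInfo 𝓔 (fun ω => ω.2.1) (fun ω => ω.1) (fun ω => ω.2.2) = 2 * l := by
  rw [condMutInfo_dsbs]
  simp [H, prob_dsbs_comp hp0 hp1 _ _ _ (fun v _ => v),
    prob_dsbs_comp hp0 hp1 _ _ _ (fun v x => (x, v)), Fin.sum_univ_five,
    Fintype.sum_prod_type, eraseChannel, enc]
  rw [show (1 - l) / 4 + (1 - l) / 4 + ((1 - l) / 4 + (1 - l) / 4) = 1 - l by ring,
    div_mul_logb_div _ four_ne_zero, div_mul_logb_div _ four_ne_zero, logb_two_four]
  ring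

lemma condH_fSel_eraseChannel :
    condH 𝓔 (fun ω => fSel ω.2.1 ω.2.2) (fun ω => (ω.1, ω.2.2)) = 1 - l := by
  rw [condH, H_dsbs_fSel, H_dsbs_comp_pair_snd (g := fun v _ => v)]
  simp [H, prob_dsbs_comp hp0 hp1 _ _ _ (fun v _ => v),
    prob_dsbs_comp hp0 hp1 _ _ _ (fun v x => (x.1, v)),
    prob_dsbs_comp hp0 hp1 _ _ _ (fun v x => (x.2, v)), Fin.sum_univ_five,
    Fintype.sum_prod_type, eraseChannel, enc]
  rw [show (1 - l) / 4 + (1 - l) / 4 + ((1 - l) / 4 + (1 - l) / 4) = 1 - l by ring,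
    show (1 - l) / 4 + (1 - l) / 4 = (1 - l) / 2 by ring, div_mul_logb_div _ two_ne_zero,
    div_mul_logb_div _ four_ne_zero, logb_two_four, Real.logb_self_eq_one one_lt_two]
  ring

end Erasure

/-- For the DSBS with `q = 1/2` (independent components), the optimal single-letter region is
`{(R_c, R_u) : R_c ≥ 0, R_u ≥ 0, R_c + 2 R_u ≥ 2}`. -/
theorem cacheRegion_dsbs_half
    (hp0 : ∀ a, 0 ≤ pDSBShalf a) (hp1 : ∑ a, pDSBShalf a = 1) :
    cacheRegion pDSBShalf hp0 hp1 fSel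
      = {R : ℝ × ℝ | 0 ≤ R.1 ∧ 0 ≤ R.2 ∧ 2 ≤ R.1 + 2 * R.2} := by
  ext ⟨Rc, Ru⟩
  constructor
  · rintro ⟨n, W, hW0, hW1, hc, hu⟩
    have := two_le_condMutInfo_add_two_mul_condH_dsbs hp0 hp1 W hW0 hW1
    exact ⟨(condMutInfo_nonneg _ _ _ _).trans hc, (condH_nonneg _ _ _).trans hu, by linarith⟩
  · rintro ⟨hc, hu, h⟩
    dsimp only at hc hu h
    have hl0 : 0 ≤ min (Rc / 2) 1 := le_min (by linarith) zero_le_one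
    have hl1 : min (Rc / 2) 1 ≤ 1 := min_le_right _ _
    refine ⟨5, eraseChannel _, eraseChannel_nonneg hl0 hl1, sum_eraseChannel _, ?_, ?_⟩
    · rw [ge_iff_le, condMutInfo_eraseChannel hp0 hp1 hl0 hl1]
      linarith [min_le_left (Rc / 2) 1]
    · rw [ge_iff_le, condH_fSel_eraseChannel hp0 hp1 hl0 hl1, sub_le_comm]
      exact le_min (by linarith) (by linarith)

end Caching
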